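/- arXiv:2303.15685 — 5 statements merged into one kernel-verified Lean document; each statement's English description precedes it below -/
import Mathlib

section
/- Let S be a generically Egyptian integral domain, let R be a subring of S, and suppose there is a nonzero ideal I of S with I ⊆ R (so I is a common ideal of R and S). Then R is generically Egyptian. -/
universe u

/-- A commutative ring `D` is *Egyptian* if every nonzero `d : D` is a sum of reciprocals
`d = 1/d₁ + ⋯ + 1/dₙ` of finitely many pairwise distinct nonzero elements `dᵢ` of `D`, the
equality holding in any field in which `D` embeds.  (For an integral domain `D` this is
equivalent to the usual definition, in which the equality is required in the fraction field
of `D`: such an equality holds in one field containing `D` iff it holds in all of them.) -/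
def IsEgyptian (D : Type u) [CommRing D] : Prop :=
  ∀ d : D, d ≠ 0 → ∃ s : Finset D, (∀ i ∈ s, i ≠ 0) ∧
    ∀ (K : Type u) [Field K] (φ : D →+* K), Function.Injective φ →
      φ d = ∑ i ∈ s, (φ i)⁻¹

/-- A domain `D` is *generically Egyptian* if `D[1/f]` is Egyptian for some nonzero `f : D`. -/
def IsGenericallyEgyptian (D : Type u) [CommRing D] : Prop :=
  ∃ f : D, f ≠ 0 ∧ IsEgyptian (Localization.Away f)

/-- A domain `D` is *locally Egyptian* if there is a finite set of generators of the unit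
ideal of `D` such that inverting any one of them yields an Egyptian ring. -/
def IsLocallyEgyptian (D : Type u) [CommRing D] : Prop :=
  ∃ s : Finset D, Ideal.span (s : Set D) = ⊤ ∧
    ∀ f ∈ s, IsEgyptian (Localization.Away f)

lemma my_sum_inv_mul_prod {A : Type*} [DecidableEq A] {K : Type*} [Field K] (s : Finset A) (f : A → K)
    (hs : ∀ i ∈ s, f i ≠ 0) :
    (∑ i ∈ s, (f i)⁻¹) * ∏ i ∈ s, f i = ∑ i ∈ s, ∏ j ∈ s.erase i, f j := by
  classical
  rw [Finset.sum_mul]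
  refine Finset.sum_congr rfl fun i hi => ?_
  rw [← Finset.mul_prod_erase s f hi, inv_mul_cancel_left₀ (hs i hi)]

lemma my_egyptian_transfer {A : Type u} [DecidableEq A] [CommRing A] [IsDomain A] (d : A) (s : Finset A)
    (hs : ∀ i ∈ s, i ≠ 0) {K₀ : Type u} [Field K₀] (φ₀ : A →+* K₀)
    (hφ₀ : Function.Injective φ₀) (h : φ₀ d = ∑ i ∈ s, (φ₀ i)⁻¹) :
    ∀ (K : Type u) [Field K] (φ : A →+* K), Function.Injective φ →
      φ d = ∑ i ∈ s, (φ i)⁻¹ := by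
  classical
  have key : d * ∏ i ∈ s, i = ∑ i ∈ s, ∏ j ∈ s.erase i, j := by
    apply hφ₀
    rw [map_mul, map_prod, map_sum, h,
      my_sum_inv_mul_prod s φ₀ (fun i hi => fun h0 => hs i hi (hφ₀ (h0.trans (map_zero _).symm)))]
    exact Finset.sum_congr rfl fun i hi => (map_prod φ₀ _ _).symm
  intro K _ φ hφ
  have hnz : ∀ i ∈ s, φ i ≠ 0 := fun i hi h0 => hs i hi (hφ (h0.trans (map_zero _).symm))
  have hp : (∏ i ∈ s, φ i) ≠ 0 := Finset.prod_ne_zero_iff.mpr hnz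
  apply mul_right_cancel₀ hp
  rw [my_sum_inv_mul_prod s φ hnz]
  have := congrArg φ key
  rw [map_mul, map_prod, map_sum] at this
  simpa using this



/-- If `S` is a generically Egyptian domain, `R` is a subring of `S`, and `I` is a nonzero
ideal of `S` contained in `R` (a nonzero common ideal of `R` and `S`), then `R` is
generically Egyptian. -/
theorem statement15 (S : Type u) [CommRing S] [IsDomain S] (hS : IsGenericallyEgyptian S)
    (R : Subring S) (I : Ideal S) (hI : I ≠ ⊥) (hIR : (I : Set S) ⊆ (R : Set S)) :
    IsGenericallyEgyptian R := by
  classical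
  obtain ⟨f, hf0, hEf⟩ := hS
  obtain ⟨a, haI, ha0⟩ := Submodule.exists_mem_ne_zero_of_ne_bot hI
  -- the common element
  have hgI : a * f ∈ I := I.mul_mem_right f haI
  set g : R := ⟨a * f, hIR hgI⟩ with hgdef
  have hgS : (g : S) = a * f := rfl
  have hafS : a * f ≠ 0 := mul_ne_zero ha0 hf0
  have hg0 : g ≠ 0 := by
    intro h
    exact hafS (by rw [← hgS, h]; rfl)
  -- the fraction field
  set K := FractionRing S with hK
  set ι : S →+* K := algebraMap S K with hι
  have hιinj : Function.Injective ι := IsFractionRing.injective S K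
  have hιne : ∀ x : S, x ≠ 0 → ι x ≠ 0 := fun x hx => (map_ne_zero_iff ι hιinj).mpr hx
  -- the map θ : S[1/f] → K
  set T := Localization.Away f with hT
  have hfu : ∀ y : Submonoid.powers f, IsUnit (ι y) := by
    rintro ⟨y, n, rfl⟩
    exact isUnit_iff_ne_zero.mpr (hιne _ (pow_ne_zero n hf0))
  set θ : T →+* K := IsLocalization.lift hfu with hθdef
  have hθeq : ∀ x : S, θ (algebraMap S T x) = ι x := fun x => IsLocalization.lift_eq hfu x
  have hSTinj : Function.Injective (algebraMap S T) :=
    IsLocalization.injective T (powers_le_nonZeroDivisors_of_noZeroDivisors hf0)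
  have hθinj : Function.Injective θ := by
    rw [hθdef, IsLocalization.lift_injective_iff]
    intro x y
    constructor
    · intro h; exact congrArg ι (hSTinj h)
    · intro h; exact congrArg (algebraMap S T) (hιinj h)
  -- the map ρ : R → K and ψ : R[1/g] → K
  set ρ : R →+* K := ι.comp (SubringClass.subtype R) with hρdef
  have hρ : ∀ x : R, ρ x = ι (x : S) := fun x => rfl
  have hρinj : Function.Injective ρ := hιinj.comp Subtype.val_injective
  set A := Localization.Away g with hA
  haveI : DecidableEq A := Classical.decEq A
  haveI : IsDomain A :=
    IsLocalization.isDomain_localization (powers_le_nonZeroDivisors_of_noZeroDivisors hg0)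
  have hgu : ∀ y : Submonoid.powers g, IsUnit (ρ y) := by
    rintro ⟨y, n, rfl⟩
    refine isUnit_iff_ne_zero.mpr (hιne _ ?_)
    show ((g ^ n : R) : S) ≠ 0
    rw [SubmonoidClass.coe_pow, hgS]
    exact pow_ne_zero n hafS
  set ψ : A →+* K := IsLocalization.lift hgu with hψdef
  have hψeq : ∀ x : R, ψ (algebraMap R A x) = ρ x := fun x => IsLocalization.lift_eq hgu x
  have hRAinj : Function.Injective (algebraMap R A) :=
    IsLocalization.injective A (powers_le_nonZeroDivisors_of_noZeroDivisors hg0)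
  have hψinj : Function.Injective ψ := by
    rw [hψdef, IsLocalization.lift_injective_iff]
    intro x y
    constructor
    · intro h; exact congrArg ρ (hRAinj h)
    · intro h; exact congrArg (algebraMap R A) (hρinj h)
  -- claim D: the image of S[1/f] multiplied by (a*f) lies in the image of R[1/g]
  have claimD : ∀ t' : T, ∃ u : A, ψ u = ι (a * f) * θ t' := by
    intro t'
    obtain ⟨⟨s', m'⟩, hrep⟩ := IsLocalization.surj (Submonoid.powers f) t'
    obtain ⟨k, hk⟩ := m'.2
    have hθrep : θ t' * ι f ^ k = ι s' := by
      have h2 := congrArg θ hrep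
      simp only [map_mul, hθeq] at h2
      rw [← hk, map_pow] at h2
      exact h2
    have hmem : a ^ (k + 1) * f * s' ∈ R := by
      apply hIR
      have : a ^ (k + 1) * f * s' = a * (a ^ k * f * s') := by ring
      rw [this]
      exact I.mul_mem_right _ haI
    refine ⟨IsLocalization.mk' A (⟨a ^ (k + 1) * f * s', hmem⟩ : R) (⟨g ^ k, ⟨k, rfl⟩⟩ : Submonoid.powers g), ?_⟩
    rw [hψdef, IsLocalization.lift_mk'_spec]
    show ι (a ^ (k + 1) * f * s') = ι ((g ^ k : R) : S) * (ι (a * f) * θ t')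
    rw [SubmonoidClass.coe_pow, hgS]
    simp only [map_mul, map_pow]
    linear_combination (-(ι a ^ (k + 1) * ι f)) * hθrep
  -- main argument
  refine ⟨g, hg0, ?_⟩
  intro d hd
  obtain ⟨⟨r, m⟩, hrep⟩ := IsLocalization.surj (Submonoid.powers g) d
  obtain ⟨n, hn⟩ := m.2
  have hrep' : d * algebraMap R A (g ^ (n + 1)) = algebraMap R A (r * g) := by
    have hn' : g ^ n = (m : R) := hn
    have h1 : d * algebraMap R A (m : R) = algebraMap R A r := hrep
    rw [pow_succ, map_mul, hn', map_mul, ← mul_assoc, h1]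
  have hupow : IsUnit (algebraMap R A (g ^ (n + 1))) :=
    IsLocalization.map_units A (⟨g ^ (n + 1), ⟨n + 1, rfl⟩⟩ : Submonoid.powers g)
  have hrr0 : r * g ≠ 0 := by
    intro h0
    rw [h0, map_zero] at hrep'
    exact hd ((hupow.mul_left_eq_zero).mp hrep')
  have hρpow : ρ (g ^ (n + 1)) = ι (a * f) ^ (n + 1) := by
    rw [hρ, SubmonoidClass.coe_pow, hgS, map_pow]
  have hψd : ψ d * ι (a * f) ^ (n + 1) = ι ((r * g : R) : S) := by
    have h2 := congrArg ψ hrep'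
    rw [map_mul, hψeq, hψeq, hρpow, hρ] at h2
    exact h2
  have hrrS : ((r * g : R) : S) ≠ 0 := fun h0 => hrr0 (Subtype.ext h0)
  have htrr0 : algebraMap S T ((r * g : R) : S) ≠ 0 := fun h0 =>
    hrrS (hSTinj (h0.trans (map_zero _).symm))
  obtain ⟨s₀, hs₀ne, hs₀sum⟩ := hEf (algebraMap S T ((r * g : R) : S)) htrr0
  have hsum : ι ((r * g : R) : S) = ∑ i ∈ s₀, (θ i)⁻¹ := by
    rw [← hθeq]
    exact hs₀sum K θ hθinj
  have haf : ι (a * f) ^ (n + 1) ≠ 0 := pow_ne_zero _ (hιne _ hafS)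
  have hF : ∀ i : T, ∃ u : A, ψ u = ι (a * f) ^ (n + 1) * θ i := by
    intro i
    obtain ⟨u, hu⟩ := claimD (algebraMap S T ((a * f) ^ n) * i)
    refine ⟨u, ?_⟩
    have hmm : θ (algebraMap S T ((a * f) ^ n) * i) = ι ((a * f) ^ n) * θ i := by
      rw [map_mul, hθeq]
    rw [hu, hmm, map_pow]
    ring
  choose F hFspec using hF
  refine ⟨s₀.image F, ?_, ?_⟩
  · intro j hj
    obtain ⟨i, hi, rfl⟩ := Finset.mem_image.mp hj
    intro h0
    have : ψ (F i) = 0 := by rw [h0, map_zero]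
    rw [hFspec i] at this
    rcases mul_eq_zero.mp this with h | h
    · exact haf h
    · exact hs₀ne i hi (hθinj (h.trans (map_zero θ).symm))
  · have hinjF : ∀ x ∈ s₀, ∀ y ∈ s₀, F x = F y → x = y := by
      intro x _ y _ hxy
      have := congrArg ψ hxy
      rw [hFspec x, hFspec y] at this
      exact hθinj (mul_left_cancel₀ haf this)
    have heq : ψ d = ∑ j ∈ s₀.image F, (ψ j)⁻¹ := by
      rw [Finset.sum_image hinjF]
      have h3 : ∀ i ∈ s₀, (ψ (F i))⁻¹ = (ι (a * f) ^ (n + 1))⁻¹ * (θ i)⁻¹ := fun i _ => by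
        rw [hFspec i, mul_inv]
      rw [Finset.sum_congr rfl h3, ← Finset.mul_sum, ← hsum, ← hψd, mul_comm,
        mul_inv_cancel_right₀ haf]
    exact my_egyptian_transfer d _ (by
      intro j hj
      obtain ⟨i, hi, rfl⟩ := Finset.mem_image.mp hj
      intro h0
      have : ψ (F i) = 0 := by rw [h0, map_zero]
      rw [hFspec i] at this
      rcases mul_eq_zero.mp this with h | h
      · exact haf h
      · exact hs₀ne i hi (hθinj (h.trans (map_zero θ).symm))) ψ hψinj heq
end

section
/- Let R ⊆ S be integral domains with the same fraction field, such that S is finitely generated as an R-module. Then R is Egyptian if and only if S is Egyptian. -/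
universe u

section helpers

variable {D : Type*} [CommRing D] [DecidableEq D]

lemma egy_iff {K : Type*} [Field K] (φ : D →+* K) (hφ : Function.Injective φ)
    (s : Finset D) (hs : ∀ i ∈ s, i ≠ 0) (d : D) :
    φ d = ∑ i ∈ s, (φ i)⁻¹ ↔ d * ∏ i ∈ s, i = ∑ i ∈ s, ∏ j ∈ s.erase i, j := by
  have hne : ∀ i ∈ s, φ i ≠ 0 := fun i hi h => hs i hi (hφ (by rw [h, map_zero]))
  have hprod : ∏ i ∈ s, φ i ≠ 0 := Finset.prod_ne_zero_iff.2 hne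
  have key : (∑ i ∈ s, (φ i)⁻¹) * ∏ i ∈ s, φ i = ∑ i ∈ s, ∏ j ∈ s.erase i, φ j := by
    rw [Finset.sum_mul]
    exact Finset.sum_congr rfl fun i hi => by
      rw [← Finset.mul_prod_erase s _ hi, inv_mul_cancel_left₀ (hne i hi)]
  constructor
  · intro h
    apply hφ
    rw [map_mul, map_prod, h, key, map_sum]
    exact Finset.sum_congr rfl fun i hi => (map_prod φ _ _).symm
  · intro h
    apply mul_right_cancel₀ hprod
    rw [key]
    have := congrArg φ h
    rw [map_mul, map_prod, map_sum] at this
    rw [this]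
    exact Finset.sum_congr rfl fun i hi => map_prod φ _ _

lemma egy_transfer {K₁ K₂ : Type*} [Field K₁] [Field K₂] (φ₁ : D →+* K₁) (φ₂ : D →+* K₂)
    (h₁ : Function.Injective φ₁) (h₂ : Function.Injective φ₂)
    (s : Finset D) (hs : ∀ i ∈ s, i ≠ 0) (d : D)
    (h : φ₁ d = ∑ i ∈ s, (φ₁ i)⁻¹) : φ₂ d = ∑ i ∈ s, (φ₂ i)⁻¹ :=
  (egy_iff φ₂ h₂ s hs d).2 ((egy_iff φ₁ h₁ s hs d).1 h)

end helpers

lemma exists_conductor {R S : Type*} [CommRing R] [IsDomain R] [CommRing S] [IsDomain S]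
    [Algebra R S]
    (hfrac : ∀ s : S, ∃ r₁ r₂ : R, r₂ ≠ 0 ∧ algebraMap R S r₂ * s = algebraMap R S r₁)
    [Module.Finite R S] :
    ∃ c : R, c ≠ 0 ∧ ∀ x : S, ∃ a : R, algebraMap R S a = algebraMap R S c * x := by
  classical
  obtain ⟨t, ht⟩ := Module.Finite.fg_top (R := R) (M := S)
  choose r1 r2 hr2 hmul using hfrac
  refine ⟨∏ g ∈ t, r2 g, Finset.prod_ne_zero_iff.2 fun g _ => hr2 g, ?_⟩
  set c : R := ∏ g ∈ t, r2 g with hc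
  have hle : Submodule.span R (t : Set S) ≤
      (LinearMap.range (Algebra.linearMap R S)).comap
        (LinearMap.mulLeft R (algebraMap R S c)) := by
    refine Submodule.span_le.2 fun g hg => ?_
    refine Submodule.mem_comap.2 ⟨(∏ g' ∈ t.erase g, r2 g') * r1 g, ?_⟩
    have : algebraMap R S ((∏ g' ∈ t.erase g, r2 g') * r1 g) = algebraMap R S c * g := by
      rw [map_mul, ← hmul g, ← mul_assoc, ← map_mul, Finset.prod_erase_mul _ _ hg]
    simpa [Algebra.linearMap_apply, LinearMap.mulLeft_apply] using this
  intro x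
  have hx : x ∈ Submodule.span R (t : Set S) := by rw [ht]; trivial
  obtain ⟨a, ha⟩ := Submodule.mem_comap.1 (hle hx)
  exact ⟨a, by simpa [Algebra.linearMap_apply, LinearMap.mulLeft_apply] using ha⟩


/-- Let `R ⊆ S` be integral domains with the same fraction field (i.e. every element of `S`
is a fraction of elements of `R`), such that `S` is finitely generated as an `R`-module.
Then `R` is Egyptian if and only if `S` is Egyptian. -/
theorem statement16 (R : Type u) (S : Type*) [CommRing R] [IsDomain R]
    [CommRing S] [IsDomain S] [Algebra R S]
    (hinj : Function.Injective (algebraMap R S))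
    (hfrac : ∀ s : S, ∃ r₁ r₂ : R, r₂ ≠ 0 ∧ algebraMap R S r₂ * s = algebraMap R S r₁)
    [Module.Finite R S] :
    IsEgyptian R ↔ IsEgyptian S := by
  classical
  set K₀ := FractionRing S with hK₀
  set ψ : S →+* K₀ := algebraMap S K₀ with hψdef
  have hψ : Function.Injective ψ := IsFractionRing.injective S K₀
  have hφ₀ : Function.Injective (ψ.comp (algebraMap R S)) := hψ.comp hinj
  have halg0 : ∀ x : R, x ≠ 0 → algebraMap R S x ≠ 0 := fun x hx h =>
    hx (hinj (by rw [h, map_zero]))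
  constructor
  · intro hR s hs
    obtain ⟨a, b, hb, hab⟩ := hfrac s
    have ha : a ≠ 0 := by
      intro h
      rw [h, map_zero] at hab
      rcases mul_eq_zero.1 hab with h' | h'
      · exact halg0 b hb h'
      · exact hs h'
    obtain ⟨u, hu0, hu⟩ := hR a ha
    have h1 : (ψ.comp (algebraMap R S)) a = ∑ i ∈ u, ((ψ.comp (algebraMap R S)) i)⁻¹ :=
      egy_transfer (algebraMap R (FractionRing R)) _ (IsFractionRing.injective R _) hφ₀
        u hu0 a (hu (FractionRing R) _ (IsFractionRing.injective R _))
    simp only [RingHom.comp_apply] at h1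
    set t : Finset S := u.image (fun i => algebraMap R S (b * i)) with htdef
    have hinjOn : ∀ x ∈ u, ∀ y ∈ u,
        algebraMap R S (b * x) = algebraMap R S (b * y) → x = y := fun x _ y _ h =>
      mul_left_cancel₀ hb (hinj h)
    have ht0 : ∀ j ∈ t, j ≠ 0 := by
      intro j hj
      obtain ⟨i, hi, rfl⟩ := Finset.mem_image.1 hj
      exact halg0 _ (mul_ne_zero hb (hu0 i hi))
    have hb0 : ψ (algebraMap R S b) ≠ 0 := fun h => halg0 b hb (hψ (by rw [h, map_zero]))
    have h2 : ψ (algebraMap R S b) * ψ s = ψ (algebraMap R S a) := by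
      rw [← map_mul, hab]
    have hψs : ψ s = ∑ j ∈ t, (ψ j)⁻¹ := by
      rw [htdef, Finset.sum_image hinjOn]
      calc ψ s = (ψ (algebraMap R S b))⁻¹ * (ψ (algebraMap R S b) * ψ s) := by
            rw [inv_mul_cancel_left₀ hb0]
        _ = (ψ (algebraMap R S b))⁻¹ * ∑ i ∈ u, (ψ (algebraMap R S i))⁻¹ := by rw [h2, h1]
        _ = ∑ i ∈ u, (ψ (algebraMap R S (b * i)))⁻¹ := by
            rw [Finset.mul_sum]
            exact Finset.sum_congr rfl fun i hi => by rw [map_mul, map_mul, mul_inv]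
    exact ⟨t, ht0, fun K _ χ hχ => egy_transfer ψ χ hψ hχ t ht0 s hψs⟩
  · intro hS r hr
    obtain ⟨c, hc, hcond⟩ := exists_conductor hfrac
    choose g hg using hcond
    have hrc : algebraMap R S (r * c) ≠ 0 := halg0 _ (mul_ne_zero hr hc)
    obtain ⟨t, ht0, ht⟩ := hS (algebraMap R S (r * c)) hrc
    have h1 : ψ (algebraMap R S (r * c)) = ∑ i ∈ t, (ψ i)⁻¹ := ht K₀ ψ hψ
    have hcS : algebraMap R S c ≠ 0 := halg0 c hc
    set u : Finset R := t.image g with hudef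
    have hinjOn : ∀ x ∈ t, ∀ y ∈ t, g x = g y → x = y := by
      intro x _ y _ h
      have := (hg x).symm.trans ((congrArg (algebraMap R S) h).trans (hg y))
      exact mul_left_cancel₀ hcS this
    have hu0 : ∀ a ∈ u, a ≠ 0 := by
      intro a ha
      obtain ⟨x, hx, rfl⟩ := Finset.mem_image.1 ha
      intro h
      have := hg x
      rw [h, map_zero] at this
      exact mul_ne_zero hcS (ht0 x hx) this.symm
    have hc0 : ψ (algebraMap R S c) ≠ 0 := fun h => halg0 c hc (hψ (by rw [h, map_zero]))
    have hφr : ψ (algebraMap R S r) = ∑ a ∈ u, (ψ (algebraMap R S a))⁻¹ := by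
      rw [hudef, Finset.sum_image hinjOn]
      calc ψ (algebraMap R S r)
          = (ψ (algebraMap R S c))⁻¹ * (ψ (algebraMap R S r) * ψ (algebraMap R S c)) := by
            rw [mul_comm (ψ (algebraMap R S r)), inv_mul_cancel_left₀ hc0]
        _ = (ψ (algebraMap R S c))⁻¹ * ∑ i ∈ t, (ψ i)⁻¹ := by
            rw [← map_mul, ← map_mul, h1]
        _ = ∑ i ∈ t, (ψ (algebraMap R S (g i)))⁻¹ := by
            rw [Finset.mul_sum]
            exact Finset.sum_congr rfl fun i hi => by rw [hg i, map_mul, mul_inv]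
    refine ⟨u, hu0, fun K _ φ hφ => egy_transfer (ψ.comp (algebraMap R S)) φ hφ₀ hφ
      u hu0 r (by simpa [RingHom.comp_apply] using hφr)⟩
end

section
/- Let R ⊆ S be integral domains with the same fraction field, such that S is finitely generated as an R-module. Then R is generically Egyptian if and only if S is generically Egyptian. -/
universe u

section Aux

variable {D : Type*} [CommRing D] [IsDomain D]

lemma eg_push {d : D} {s : Finset D}
    (h : algebraMap D (FractionRing D) d = ∑ i ∈ s, (algebraMap D (FractionRing D) i)⁻¹)
    {K : Type*} [Field K] (φ : D →+* K) (hφ : Function.Injective φ) :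
    φ d = ∑ i ∈ s, (φ i)⁻¹ := by
  let L : FractionRing D →+* K := IsFractionRing.lift hφ
  have hc : ∀ x : D, L (algebraMap D (FractionRing D) x) = φ x := fun x =>
    IsFractionRing.lift_algebraMap hφ x
  calc φ d = L (algebraMap D (FractionRing D) d) := (hc d).symm
    _ = ∑ i ∈ s, (φ i)⁻¹ := by
        rw [h, map_sum]
        exact Finset.sum_congr rfl fun i hi => by rw [map_inv₀, hc]

lemma isEgyptian_iff_frac :
    IsEgyptian D ↔ ∀ d : D, d ≠ 0 → ∃ s : Finset D, (∀ i ∈ s, i ≠ 0) ∧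
      algebraMap D (FractionRing D) d = ∑ i ∈ s, (algebraMap D (FractionRing D) i)⁻¹ := by
  constructor
  · intro h d hd
    obtain ⟨s, hs0, hs⟩ := h d hd
    exact ⟨s, hs0, hs (FractionRing D) (algebraMap D (FractionRing D))
      (IsFractionRing.injective D (FractionRing D))⟩
  · intro h d hd
    obtain ⟨s, hs0, hs⟩ := h d hd
    exact ⟨s, hs0, fun K _ φ hφ => eg_push hs φ hφ⟩

lemma egyptian_transfer {E : Type*} [CommRing E] [IsDomain E]
    (ψ : D →+* E) (hψ : Function.Injective ψ)
    (hfr : ∀ e : E, ∃ a b : D, b ≠ 0 ∧ ψ b * e = ψ a)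
    (hD : IsEgyptian D) : IsEgyptian E := by
  classical
  rw [isEgyptian_iff_frac]
  intro e he
  obtain ⟨a, b, hb, hab⟩ := hfr e
  have hψb : ψ b ≠ 0 := fun h => hb (hψ (h.trans (map_zero ψ).symm))
  have ha : a ≠ 0 := by
    rintro rfl
    rw [map_zero] at hab
    rcases mul_eq_zero.mp hab with h | h
    · exact hψb h
    · exact he h
  obtain ⟨s, hs0, hsum⟩ := isEgyptian_iff_frac.mp hD a ha
  set ι := algebraMap E (FractionRing E) with hι
  have hιinj : Function.Injective ι := IsFractionRing.injective E (FractionRing E)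
  set φ := ι.comp ψ with hφdef
  have hφ : Function.Injective φ := hιinj.comp hψ
  have key : φ a = ∑ i ∈ s, (φ i)⁻¹ := eg_push hsum φ hφ
  have hφb : φ b ≠ 0 := fun h => hψb (hιinj (h.trans (map_zero ι).symm))
  refine ⟨s.image (fun i => ψ (i * b)), ?_, ?_⟩
  · intro j hj
    obtain ⟨i, hi, rfl⟩ := Finset.mem_image.mp hj
    intro h
    have : i * b = 0 := hψ (h.trans (map_zero ψ).symm)
    rcases mul_eq_zero.mp this with h' | h'
    · exact hs0 i hi h'
    · exact hb h'
  · rw [Finset.sum_image (fun x hx y hy hxy => mul_right_cancel₀ hb (hψ hxy))]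
    have h1 : φ b * ι e = φ a := by
      rw [hφdef, RingHom.comp_apply, RingHom.comp_apply, ← map_mul, hab]
    have : ι e = φ a * (φ b)⁻¹ := by
      field_simp at h1 ⊢
      linear_combination h1
    rw [this, key, Finset.sum_mul]
    refine Finset.sum_congr rfl fun i hi => ?_
    rw [map_mul ψ, map_mul ι, mul_inv]
    rfl

end Aux

lemma egyptian_of_bij {D E : Type*} [CommRing D] [IsDomain D] [CommRing E] [IsDomain E]
    (χ : D →+* E) (hb : Function.Bijective χ) (hE : IsEgyptian E) : IsEgyptian D := by
  let eqv := RingEquiv.ofBijective χ hb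
  exact egyptian_transfer (eqv.symm : E →+* D) eqv.symm.injective
    (fun dd => ⟨eqv dd, 1, one_ne_zero, by simp⟩) hE

lemma loc_step {D E : Type*} [CommRing D] [IsDomain D] [CommRing E] [IsDomain E]
    (ι : D →+* E) (hι : Function.Injective ι) (x c : D) (hx : x ≠ 0) (hc0 : c ≠ 0)
    (y : E) (hy : y = ι c)
    (hu : IsUnit (algebraMap E (Localization.Away y) (ι x)))
    (hP : ∀ s : E, ∃ a b : D, b ≠ 0 ∧ ι b * s = ι a) :
    ∃ ψ : Localization.Away x →+* Localization.Away y,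
      Function.Injective ψ ∧
      (∀ r : D, ψ (algebraMap D (Localization.Away x) r)
        = algebraMap E (Localization.Away y) (ι r)) ∧
      (∀ e, ∃ a b : Localization.Away x, b ≠ 0 ∧ ψ b * e = ψ a) := by
  subst hy
  have hιc : ι c ≠ 0 := fun h => hc0 (hι (h.trans (map_zero ι).symm))
  have hAinj : Function.Injective (algebraMap D (Localization.Away x)) :=
    IsLocalization.injective _ (powers_le_nonZeroDivisors_of_noZeroDivisors hx)
  set ρ : D →+* Localization.Away (ι c) := (algebraMap E (Localization.Away (ι c))).comp ι
    with hρ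
  have hux : IsUnit (ρ x) := hu
  refine ⟨Localization.awayLift ρ x hux, ?_, ?_, ?_⟩
  case refine_2 =>
    intro r
    exact IsLocalization.Away.lift_eq (S := Localization.Away x) x hux r
  case refine_1 =>
    rw [injective_iff_map_eq_zero]
    intro z hz
    obtain ⟨⟨r, m⟩, hm⟩ := IsLocalization.surj (Submonoid.powers x) z
    have h2 : ρ r = 0 := by
      have := IsLocalization.Away.lift_eq (S := Localization.Away x) x hux r
      rw [← this, ← hm, map_mul, hz, zero_mul]
    obtain ⟨m', hm'⟩ :=
      (IsLocalization.map_eq_zero_iff (Submonoid.powers (ι c))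
        (Localization.Away (ι c)) (ι r)).mp h2
    have hm0 : (m' : E) ≠ 0 := by
      obtain ⟨k, hk⟩ := m'.2
      exact hk ▸ pow_ne_zero _ hιc
    have hr : r = 0 := hι (((mul_eq_zero.mp hm').resolve_left hm0).trans (map_zero ι).symm)
    have : z * algebraMap D (Localization.Away x) ↑m = 0 := by
      rw [hm, hr, map_zero]
    exact ((IsLocalization.map_units (Localization.Away x) m).mul_left_eq_zero).mp this
  case refine_3 =>
    intro e
    obtain ⟨⟨s, m⟩, hm⟩ := IsLocalization.surj (Submonoid.powers (ι c)) e
    obtain ⟨k, hk⟩ := m.2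
    have hk' : (ι c) ^ k = ↑m := hk
    obtain ⟨a', b', hb', hab⟩ := hP s
    refine ⟨algebraMap D _ a', algebraMap D _ (b' * c ^ k), ?_, ?_⟩
    · intro h
      exact mul_ne_zero hb' (pow_ne_zero k hc0) (hAinj (h.trans (map_zero _).symm))
    · rw [IsLocalization.Away.lift_eq x hux, IsLocalization.Away.lift_eq x hux]
      calc algebraMap E (Localization.Away (ι c)) (ι (b' * c ^ k)) * e
          = algebraMap E (Localization.Away (ι c)) (ι b') *
            (e * algebraMap E (Localization.Away (ι c)) ↑m) := by
            rw [map_mul ι, map_pow ι, hk', map_mul]; ring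
        _ = algebraMap E (Localization.Away (ι c)) (ι b' * s) := by rw [hm, map_mul]
        _ = algebraMap E (Localization.Away (ι c)) (ι a') := by rw [hab]

lemma loc_step_egyptian {D E : Type*} [CommRing D] [IsDomain D] [CommRing E] [IsDomain E]
    (ι : D →+* E) (hι : Function.Injective ι) (x c : D) (hx : x ≠ 0) (hc0 : c ≠ 0)
    (y : E) (hy : y = ι c)
    (hu : IsUnit (algebraMap E (Localization.Away y) (ι x)))
    (hP : ∀ s : E, ∃ a b : D, b ≠ 0 ∧ ι b * s = ι a)
    (hEg : IsEgyptian (Localization.Away x)) : IsEgyptian (Localization.Away y) := by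
  have hy0 : y ≠ 0 := hy ▸ fun h => hc0 (hι (h.trans (map_zero ι).symm))
  haveI : IsDomain (Localization.Away x) :=
    IsLocalization.isDomain_localization (powers_le_nonZeroDivisors_of_noZeroDivisors hx)
  haveI : IsDomain (Localization.Away y) :=
    IsLocalization.isDomain_localization (powers_le_nonZeroDivisors_of_noZeroDivisors hy0)
  obtain ⟨ψ, hinj, _, hfr⟩ := loc_step ι hι x c hx hc0 y hy hu hP
  exact egyptian_transfer ψ hinj hfr hEg

/-- Let `R ⊆ S` be integral domains with the same fraction field (i.e. every element of `S`
is a fraction of elements of `R`), such that `S` is finitely generated as an `R`-module.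
Then `R` is generically Egyptian if and only if `S` is generically Egyptian. -/
theorem statement17 (R : Type u) (S : Type*) [CommRing R] [IsDomain R]
    [CommRing S] [IsDomain S] [Algebra R S]
    (hinj : Function.Injective (algebraMap R S))
    (hfrac : ∀ s : S, ∃ r₁ r₂ : R, r₂ ≠ 0 ∧ algebraMap R S r₂ * s = algebraMap R S r₁)
    [Module.Finite R S] :
    IsGenericallyEgyptian R ↔ IsGenericallyEgyptian S := by
  classical
  obtain ⟨T, hT⟩ := Module.Finite.fg_top (R := R) (M := S)
  choose num den hden hnd using hfrac
  set d : R := ∏ t ∈ T, den t with hd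
  have hd0 : d ≠ 0 := Finset.prod_ne_zero_iff.mpr fun t _ => hden t
  have hdS : ∀ s : S, ∃ r : R, algebraMap R S d * s = algebraMap R S r := by
    let M : Submodule R S :=
    { carrier := {s | ∃ r : R, algebraMap R S d * s = algebraMap R S r}
      add_mem' := by
        rintro a b ⟨ra, ha⟩ ⟨rb, hb⟩
        exact ⟨ra + rb, by rw [mul_add, ha, hb, map_add]⟩
      zero_mem' := ⟨0, by simp⟩
      smul_mem' := by
        rintro xx a ⟨ra, ha⟩
        exact ⟨xx * ra, by rw [Algebra.smul_def, map_mul, mul_left_comm, ha]⟩ }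
    have hTM : (T : Set S) ⊆ M := by
      intro t ht
      refine ⟨(∏ t' ∈ T.erase t, den t') * num t, ?_⟩
      calc algebraMap R S d * t
          = algebraMap R S (∏ t' ∈ T.erase t, den t') * (algebraMap R S (den t) * t) := by
            rw [hd, ← Finset.mul_prod_erase T den (Finset.mem_coe.mp ht), map_mul]; ring
        _ = algebraMap R S ((∏ t' ∈ T.erase t, den t') * num t) := by
            rw [hnd t, map_mul]
    have hMtop : M = ⊤ := top_unique (hT ▸ Submodule.span_le.mpr hTM)
    intro s
    have : s ∈ M := by rw [hMtop]; trivial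
    exact this
  have hP : ∀ s : S, ∃ a b : R, b ≠ 0 ∧ algebraMap R S b * s = algebraMap R S a :=
    fun s => ⟨(hdS s).choose, d, hd0, (hdS s).choose_spec⟩
  constructor
  · rintro ⟨f, hf0, hEf⟩
    have hdf0 : d * f ≠ 0 := mul_ne_zero hd0 hf0
    -- step (a): localize R further, from Away f to Away (d*f)
    have hE1 : IsEgyptian (Localization.Away (d * f)) := by
      refine loc_step_egyptian (RingHom.id R) Function.injective_id f (d * f) hf0 hdf0
        (d * f) rfl ?_ (fun s => ⟨s, 1, one_ne_zero, by simp⟩) hEf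
      exact IsLocalization.Away.isUnit_of_dvd (d * f) (dvd_mul_left f d)
    -- step (c): move to S
    have hE2 : IsEgyptian (Localization.Away (algebraMap R S (d * f))) := by
      refine loc_step_egyptian (algebraMap R S) hinj (d * f) (d * f) hdf0 hdf0
        (algebraMap R S (d * f)) rfl ?_ hP hE1
      exact IsLocalization.Away.algebraMap_isUnit _
    exact ⟨algebraMap R S (d * f), fun h => hdf0 (hinj (h.trans (map_zero _).symm)), hE2⟩
  · rintro ⟨h, hh0, hEh⟩
    obtain ⟨r₁, r₂, hr₂, hr⟩ : ∃ r₁ r₂ : R, r₂ ≠ 0 ∧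
        algebraMap R S r₂ * h = algebraMap R S r₁ := ⟨num h, den h, hden h, hnd h⟩
    have hr₁ : r₁ ≠ 0 := by
      rintro rfl
      rw [map_zero] at hr
      rcases mul_eq_zero.mp hr with h' | h'
      · exact hr₂ (hinj (h'.trans (map_zero _).symm))
      · exact hh0 h'
    set cR : R := d * (r₁ * r₂) with hcR
    have hc0 : cR ≠ 0 := mul_ne_zero hd0 (mul_ne_zero hr₁ hr₂)
    set y : S := algebraMap R S cR with hy
    have hy0 : y ≠ 0 := fun hh => hc0 (hinj (hh.trans (map_zero _).symm))
    haveI hdomy : IsDomain (Localization.Away y) :=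
      IsLocalization.isDomain_localization (powers_le_nonZeroDivisors_of_noZeroDivisors hy0)
    haveI hdomc : IsDomain (Localization.Away cR) :=
      IsLocalization.isDomain_localization (powers_le_nonZeroDivisors_of_noZeroDivisors hc0)
    set B : S →+* Localization.Away y := algebraMap S (Localization.Away y) with hB
    -- step (b): from Away h to Away y (inside S)
    have hEy : IsEgyptian (Localization.Away y) := by
      refine loc_step_egyptian (RingHom.id S) Function.injective_id h y hh0 hy0
        y rfl ?_ (fun s => ⟨s, 1, one_ne_zero, by simp⟩) hEh
      -- IsUnit (B h)
      have hu1 : IsUnit (B (algebraMap R S r₁)) := by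
        refine IsLocalization.Away.isUnit_of_dvd y ⟨algebraMap R S (d * r₂), ?_⟩
        rw [hy, hcR, ← map_mul]
        ring_nf
      have hu2 : IsUnit (B (algebraMap R S r₂) * B h) := by
        rw [← map_mul, hr]; exact hu1
      exact isUnit_of_mul_isUnit_right hu2
    -- step (χ): the map Away cR → Away y is bijective
    obtain ⟨χ, hχinj, hχcom, _⟩ :=
      loc_step (algebraMap R S) hinj cR cR hc0 hc0 y hy
        (hy ▸ IsLocalization.Away.algebraMap_isUnit _) hP
    have hχsurj : Function.Surjective χ := by
      intro e
      obtain ⟨⟨s, m⟩, hm⟩ := IsLocalization.surj (Submonoid.powers y) e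
      obtain ⟨k, hk⟩ := m.2
      have hk' : y ^ k = ↑m := hk
      obtain ⟨r, hrs⟩ := hdS s
      have hunit : IsUnit (algebraMap R (Localization.Away cR) (d * cR ^ k)) := by
        rw [map_mul, map_pow]
        exact (IsLocalization.Away.isUnit_of_dvd cR ⟨r₁ * r₂, rfl⟩).mul
          ((IsLocalization.Away.algebraMap_isUnit cR).pow k)
      obtain ⟨uu, huu⟩ := hunit
      refine ⟨algebraMap R (Localization.Away cR) r * ↑uu⁻¹, ?_⟩
      have he : e * χ (algebraMap R (Localization.Away cR) (d * cR ^ k))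
          = χ (algebraMap R (Localization.Away cR) r) := by
        rw [hχcom, hχcom, map_mul (algebraMap R S), map_pow (algebraMap R S), ← hy]
        rw [map_mul B, hk']
        calc e * (B (algebraMap R S d) * B ↑m)
            = B (algebraMap R S d) * (e * B ↑m) := by ring
          _ = B (algebraMap R S d * s) := by rw [hm, map_mul]
          _ = B (algebraMap R S r) := by rw [hrs]
      calc χ (algebraMap R (Localization.Away cR) r * ↑uu⁻¹)
          = χ (algebraMap R (Localization.Away cR) r) * χ ↑uu⁻¹ := map_mul χ _ _
        _ = e * (χ (algebraMap R (Localization.Away cR) (d * cR ^ k)) * χ ↑uu⁻¹) := by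
            rw [← he]; ring
        _ = e * (χ ↑uu * χ ↑uu⁻¹) := by rw [← huu]
        _ = e := by rw [← map_mul χ, uu.mul_inv, map_one, mul_one]
    exact ⟨cR, hc0, egyptian_of_bij χ ⟨hχinj, hχsurj⟩ hEy⟩
end

section
/- Let F be a field. Then the polynomial ring F[X] is locally Egyptian (although it is not Egyptian): the elements X and 1 − X generate the unit ideal of F[X], and both localizations F[X][1/X] and F[X][1/(1−X)] are Egyptian. -/
/-!
A sum of distinct units `u` of a ring is the Egyptian sum of the distinct reciprocals `u⁻¹`.
Every Laurent polynomial over a field is a sum of distinct monomials `c Tⁿ` with `c ≠ 0`, which are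
units; since `F[X][1/X]` is the Laurent polynomial ring and `X ↦ 1 - X` is an automorphism of
`F[X]`, both localizations are Egyptian. In `F[X]` itself, reciprocals of nonzero polynomials have
valuation at most `1` at infinity, hence so do their sums, whereas `X` has valuation `exp 1`.
-/

universe u

open Polynomial

theorem IsEgyptian.of_ringEquiv {D D' : Type u} [CommRing D] [CommRing D'] (e : D ≃+* D')
    (h : IsEgyptian D) : IsEgyptian D' := by
  classical
  intro d hd
  obtain ⟨s, hs0, hs⟩ := h (e.symm d) (by simpa using hd)
  refine ⟨s.image e, by simpa using hs0, fun K _ φ hφ => ?_⟩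
  rw [Finset.sum_image fun a _ b _ hab => e.injective hab]
  simpa using hs K (φ.comp e.toRingHom) (hφ.comp e.injective)

theorem IsEgyptian.of_forall_exists_sum_isUnit {D : Type u} [CommRing D]
    (h : ∀ d : D, d ≠ 0 → ∃ t : Finset D, (∀ x ∈ t, IsUnit x) ∧ ∑ x ∈ t, x = d) :
    IsEgyptian D := by
  classical
  intro d hd
  obtain ⟨t, ht, rfl⟩ := h d hd
  have : Nontrivial D := nontrivial_of_ne _ _ hd
  refine ⟨t.image Ring.inverse, ?_, fun K _ φ _ => ?_⟩
  · simp only [Finset.mem_image]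
    rintro _ ⟨x, hx, rfl⟩
    exact (ht x hx).ringInverse.ne_zero
  · rw [Finset.sum_image fun x hx y hy hxy => by
      rw [← Ring.inverse_inverse (ht x hx), hxy, Ring.inverse_inverse (ht y hy)], map_sum]
    refine Finset.sum_congr rfl fun x hx => ?_
    obtain ⟨u, rfl⟩ := ht x hx
    rw [Ring.inverse_unit, map_units_inv, inv_inv]

theorem AddMonoidAlgebra.isUnit_single {k G : Type*} [Field k] [AddCommGroup G] (g : G) {a : k}
    (ha : a ≠ 0) : IsUnit (single g a : AddMonoidAlgebra k G) :=
  IsUnit.of_mul_eq_one (single (-g) a⁻¹) <| by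
    rw [single_mul_single, add_neg_cancel, mul_inv_cancel₀ ha, one_def]

theorem AddMonoidAlgebra.isEgyptian {k G : Type*} [Field k] [AddCommGroup G] :
    IsEgyptian (AddMonoidAlgebra k G) := by
  classical
  refine IsEgyptian.of_forall_exists_sum_isUnit fun f _ => ?_
  refine ⟨f.coeff.support.image fun g => single g (f.coeff g), ?_, ?_⟩
  · simp only [Finset.mem_image, Finsupp.mem_support_iff]
    rintro _ ⟨g, hg, rfl⟩
    exact isUnit_single g hg
  · rw [Finset.sum_image]
    · exact f.sum_coeff_single
    · intro g hg g' _ h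
      exact ((single_inj.1 h).resolve_right fun h0 => Finsupp.mem_support_iff.1 hg h0.1).1

theorem Polynomial.isEgyptian_localizationAway_X (F : Type u) [Field F] :
    IsEgyptian (Localization.Away (X : F[X])) :=
  (AddMonoidAlgebra.isEgyptian (k := F) (G := ℤ)).of_ringEquiv
    (IsLocalization.algEquiv (Submonoid.powers (X : F[X])) (LaurentPolynomial F) _).toRingEquiv

theorem Polynomial.isEgyptian_localizationAway_one_sub_X (F : Type u) [Field F] :
    IsEgyptian (Localization.Away (1 - X : F[X])) := by
  let σ : F[X] ≃ₐ[F] F[X] := algEquivOfCompEqX (1 - X) (1 - X) (by simp) (by simp)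
  refine (isEgyptian_localizationAway_X F).of_ringEquiv
    (IsLocalization.ringEquivOfRingEquiv (M := Submonoid.powers X)
      (T := Submonoid.powers (1 - X)) _ _ σ.toRingEquiv ?_)
  simp [Submonoid.map_powers, σ]

theorem Polynomial.not_isEgyptian (F : Type u) [Field F] : ¬ IsEgyptian F[X] := by
  classical
  intro h
  obtain ⟨s, hs0, hs⟩ := h X X_ne_zero
  have hXsum := hs (RatFunc F) (algebraMap F[X] (RatFunc F)) (RatFunc.algebraMap_injective F)
  have hle : RatFunc.inftyValuation F (∑ i ∈ s, (algebraMap F[X] (RatFunc F) i)⁻¹) ≤ 1 := by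
    refine Valuation.map_sum_le _ fun i hi => ?_
    rw [map_inv₀, RatFunc.inftyValuation_apply, RatFunc.inftyValuation.polynomial _ (hs0 i hi),
      ← WithZero.exp_neg, ← WithZero.exp_zero, WithZero.exp_le_exp]
    omega
  rw [← hXsum, RatFunc.algebraMap_X, RatFunc.inftyValuation.X, ← WithZero.exp_zero,
    WithZero.exp_le_exp] at hle
  omega

theorem Polynomial.span_X_one_sub_X (F : Type u) [Field F] :
    Ideal.span {(X : F[X]), 1 - X} = ⊤ := by
  rw [Ideal.span_insert, ← Ideal.isCoprime_iff_sup_eq, Ideal.isCoprime_span_singleton_iff]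
  exact ⟨1, 1, by ring⟩

/-- For any field `F`, the polynomial ring `F[X]` is locally Egyptian although it is not
Egyptian: the elements `X` and `1 - X` generate the unit ideal of `F[X]`, and both
localizations `F[X][1/X]` and `F[X][1/(1-X)]` are Egyptian. -/
theorem statement18 (F : Type u) [Field F] :
    IsLocallyEgyptian (Polynomial F) ∧ ¬ IsEgyptian (Polynomial F) ∧
    Ideal.span {(Polynomial.X : Polynomial F), 1 - Polynomial.X} = ⊤ ∧
    IsEgyptian (Localization.Away (Polynomial.X : Polynomial F)) ∧
    IsEgyptian (Localization.Away (1 - Polynomial.X : Polynomial F)) := by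
  classical
  have hX := isEgyptian_localizationAway_X F
  have hOneSubX := isEgyptian_localizationAway_one_sub_X F
  have hspan := span_X_one_sub_X F
  refine ⟨⟨{X, 1 - X}, by rwa [Finset.coe_pair], ?_⟩, not_isEgyptian F, hspan, hX, hOneSubX⟩
  simpa only [Finset.mem_insert, Finset.mem_singleton, forall_eq_or_imp, forall_eq]
    using ⟨hX, hOneSubX⟩
end

section
/- Let k be a field and let D = k[X₁, X₂, X₃, …] be the polynomial ring in countably infinitely many variables over k. Then D is not generically Egyptian; that is, for every nonzero f ∈ D, the localization D[1/f] is not Egyptian. -/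
/-!
Pick a variable `X n` that does not occur in `f`, and embed `D[1/f]` into `F(X)`, where `F` is the
fraction field of the polynomial ring in the remaining variables and `X n ↦ X`. Every nonzero
element of `D[1/f]` is `g / f ^ m` with `f` a nonzero constant, so its degree in `X` is at least
`0`; hence every sum of reciprocals has degree at most `0` (the degree at infinity is a
valuation), while `X n` has degree `1`.
-/

universe u

theorem not_isEgyptian_of_one_lt_valuation {D K : Type u} [CommRing D] [Field K]
    {Γ : Type*} [LinearOrderedCommGroupWithZero Γ] (v : Valuation K Γ)
    (φ : D →+* K) (hφ : Function.Injective φ) (hv : ∀ d, d ≠ 0 → 1 ≤ v (φ d))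
    {x : D} (hx : 1 < v (φ x)) : ¬ IsEgyptian D := by
  intro hD
  have hx0 : x ≠ 0 := by rintro rfl; simp at hx
  obtain ⟨s, hs, hsum⟩ := hD x hx0
  have : v (φ x) ≤ 1 := by
    rw [hsum K φ hφ]
    refine v.map_sum_le fun i hi => ?_
    rw [map_inv₀]
    exact inv_le_one_of_one_le₀ (hv i (hs i hi))
  exact this.not_gt hx

namespace MvPolynomial

open RatFunc Polynomial

variable {σ R : Type*} [CommRing R] [IsDomain R]

section

variable [DecidableEq σ]

noncomputable def toRatFunc (n : σ) :
    MvPolynomial σ R →+* RatFunc (FractionRing (MvPolynomial {b // b ≠ n} R)) :=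
  (algebraMap (FractionRing (MvPolynomial {b // b ≠ n} R))[X] _).comp <|
    (Polynomial.mapRingHom (algebraMap (MvPolynomial {b // b ≠ n} R) _)).comp <|
    ((optionEquivLeft R {b // b ≠ n}).toRingHom.comp
      (rename (Equiv.optionSubtypeNe n).symm).toRingHom)

theorem toRatFunc_apply (n : σ) (p : MvPolynomial σ R) :
    toRatFunc n p = algebraMap _ (RatFunc _)
      ((optionEquivLeft R {b // b ≠ n} (rename (Equiv.optionSubtypeNe n).symm p)).map
        (algebraMap _ (FractionRing (MvPolynomial {b // b ≠ n} R)))) :=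
  rfl

theorem toRatFunc_injective (n : σ) : Function.Injective (toRatFunc (R := R) n) := by
  intro p q h
  simp only [toRatFunc_apply] at h
  exact rename_injective _ (Equiv.injective _) <| (optionEquivLeft R _).injective <|
    Polynomial.map_injective _ (IsFractionRing.injective _ _) <|
      IsFractionRing.injective _ _ h

theorem toRatFunc_X_self (n : σ) : toRatFunc (R := R) n (X n) = RatFunc.X := by
  simp [toRatFunc_apply, optionEquivLeft_X_none]

theorem inftyValuation_toRatFunc (n : σ)
    [DecidableEq (RatFunc (FractionRing (MvPolynomial {b // b ≠ n} R)))]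
    {p : MvPolynomial σ R} (hp : p ≠ 0) :
    inftyValuation _ (toRatFunc n p) = WithZero.exp (p.degreeOf n : ℤ) := by
  have hp' := (toRatFunc_injective (R := R) n).ne_iff.mpr hp
  rw [map_zero, toRatFunc_apply] at hp'
  rw [inftyValuation_apply, toRatFunc_apply,
    inftyValuation.polynomial _ fun h0 => hp' (by rw [h0, map_zero]),
    Polynomial.natDegree_map_eq_of_injective (IsFractionRing.injective _ _), degreeOf_eq_natDegree]

end

theorem not_isEgyptian_away_of_notMem_vars {f : MvPolynomial σ R} (hf : f ≠ 0) {n : σ}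
    (hn : n ∉ f.vars) : ¬ IsEgyptian (Localization.Away f) := by
  classical
  set ι := toRatFunc (R := R) n
  set v := inftyValuation (FractionRing (MvPolynomial {b // b ≠ n} R))
  have hι : Function.Injective ι := toRatFunc_injective n
  have hvf : v (ι f) = 1 := by
    rw [inftyValuation_toRatFunc n hf, not_not.mp (mem_vars_iff_degreeOf_ne_zero.not.mp hn)]
    rfl
  let φ := IsLocalization.Away.lift f (S := Localization.Away f) (g := ι)
    ((map_ne_zero_iff ι hι).mpr hf).isUnit
  have hφι (p : MvPolynomial σ R) : φ (algebraMap _ _ p) = ι p := IsLocalization.lift_eq _ p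
  have hφ : Function.Injective φ := by
    have hA := IsLocalization.injective (Localization.Away f)
      (powers_le_nonZeroDivisors_of_noZeroDivisors hf)
    exact (IsLocalization.lift_injective_iff _).mpr fun p q => hA.eq_iff.trans hι.eq_iff.symm
  refine not_isEgyptian_of_one_lt_valuation v φ hφ
    (x := algebraMap (MvPolynomial σ R) (Localization.Away f) (X n)) (fun z hz => ?_) ?_
  · obtain ⟨⟨p, _, m, rfl⟩, rfl⟩ := IsLocalization.mk'_surjective (Submonoid.powers f) z
    have hp : p ≠ 0 := by rintro rfl; simp at hz
    have hvz := congrArg (v ∘ φ) (IsLocalization.mk'_spec (Localization.Away f) p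
      (⟨f ^ m, m, rfl⟩ : Submonoid.powers f))
    simp only [Function.comp_apply, map_mul, hφι, map_pow, hvf, one_pow, mul_one] at hvz
    rw [hvz, inftyValuation_toRatFunc n hp, ← WithZero.exp_zero, WithZero.exp_le_exp]
    exact Int.natCast_nonneg _
  · rw [hφι, toRatFunc_X_self, inftyValuation.X, ← WithZero.exp_zero, WithZero.exp_lt_exp]
    exact one_pos

theorem not_isGenericallyEgyptian [Infinite σ] : ¬ IsGenericallyEgyptian (MvPolynomial σ R) := by
  rintro ⟨f, hf, hE⟩
  obtain ⟨n, hn⟩ := Infinite.exists_notMem_finset f.vars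
  exact not_isEgyptian_away_of_notMem_vars hf hn hE

end MvPolynomial

/-- If `k` is a field and `D = k[X₁, X₂, X₃, …]` is a polynomial ring in countably many
variables over `k`, then `D` is not generically Egyptian: there is no nonzero `f : D` such
that `D[1/f]` is Egyptian. -/
theorem statement19 (k : Type u) [Field k] :
    ¬ IsGenericallyEgyptian (MvPolynomial ℕ k) :=
  MvPolynomial.not_isGenericallyEgyptian
end
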